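/- If S ⊆ ℕ^ℕ is Δ⁰₂, then S = S \ [S_∞] (since S_∞ = ∅ and hence [S_∞] = ∅). -/

import Mathlib

/-!
In `[S_∞]` both `S` and its complement are dense, because `S_∞` is a fixed point of the
derivative. As a closed subset of Baire space, `[S_∞]` is Polish, hence a Baire space, and for
`S ∈ Δ⁰₂` both traces are `G_δ`. Two disjoint dense `G_δ` sets can only live in an empty Baire
space, so `[S_∞] = ∅`.
-/

open Ordinal Filter Topology

/-- The first `n` values of `f` as a finite sequence. -/
def seg (f : ℕ → ℕ) (n : ℕ) : List ℕ := (List.range n).map f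

/-- `[X]`: the set of infinite sequences all of whose initial segments lie in `X`. -/
def ext (X : Set (List ℕ)) : Set (ℕ → ℕ) := {f | ∀ n, seg f n ∈ X}

/-- `σ` is an initial segment of `f`. -/
def isInit (σ : List ℕ) (f : ℕ → ℕ) : Prop := seg f σ.length = σ

/-- One step of the derivative process relative to `S`. -/
def derivStep (S : Set (ℕ → ℕ)) (X : Set (List ℕ)) : Set (List ℕ) :=
  {x ∈ X | ∃ f g : ℕ → ℕ, f ∈ ext X ∧ g ∈ ext X ∧ isInit x f ∧ isInit x g ∧ f ∈ S ∧ g ∉ S}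

/-- The transfinite sequence `S_α`. -/
noncomputable def dSeq (S : Set (ℕ → ℕ)) (α : Ordinal.{0}) : Set (List ℕ) :=
  Ordinal.limitRecOn α Set.univ (fun _ X => derivStep S X)
    (fun o _ ih => ⋂ (β : Set.Iio o), ih β.1 β.2)

/-- `α(S)`: the least ordinal where the process stabilizes. -/
noncomputable def kernelOrd (S : Set (ℕ → ℕ)) : Ordinal.{0} :=
  sInf {α | dSeq S α = dSeq S (α + 1)}

/-- `S_∞`, the kernel. -/
noncomputable def kernel (S : Set (ℕ → ℕ)) : Set (List ℕ) := dSeq S (kernelOrd S)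

/-- `β(σ)`: the least ordinal `α` with `σ ∉ S_α`. -/
noncomputable def bOrd (S : Set (ℕ → ℕ)) (σ : List ℕ) : Ordinal.{0} :=
  sInf {α | σ ∉ dSeq S α}

open Classical in
/-- `S` is guessable. -/
def Guessable (S : Set (ℕ → ℕ)) : Prop :=
  ∃ G : List ℕ → ℕ, ∀ f : ℕ → ℕ,
    Tendsto (fun n => G (seg f n)) atTop (𝓝 (if f ∈ S then 1 else 0))

/-- `Δ⁰₂`: both a countable union of closed sets and a countable intersection of open sets. -/
def IsDelta02 (S : Set (ℕ → ℕ)) : Prop :=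
  (∃ F : ℕ → Set (ℕ → ℕ), (∀ n, IsClosed (F n)) ∧ S = ⋃ n, F n) ∧
  (∃ U : ℕ → Set (ℕ → ℕ), (∀ n, IsOpen (U n)) ∧ S = ⋂ n, U n)

theorem IsGδ.isEmpty_of_dense_of_dense_compl {X : Type*} [TopologicalSpace X] [BaireSpace X]
    {A : Set X} (hA : IsGδ A) (hAc : IsGδ Aᶜ) (hd : Dense A) (hdc : Dense Aᶜ) : IsEmpty X := by
  have := hd.inter_of_Gδ hA hAc hdc
  rw [Set.inter_compl_self] at this
  exact not_nonempty_iff.1 (this.nonempty_iff.not.1 Set.not_nonempty_empty)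

lemma seg_length (f : ℕ → ℕ) (n : ℕ) : (seg f n).length = n := by simp [seg]

lemma seg_eq_seg_iff {f g : ℕ → ℕ} {n : ℕ} : seg f n = seg g n ↔ g ∈ PiNat.cylinder f n := by
  simp [seg, List.map_inj_left, PiNat.cylinder, eq_comm]

lemma isOpen_setOf_seg_mem (X : Set (List ℕ)) (n : ℕ) : IsOpen {f : ℕ → ℕ | seg f n ∈ X} :=
  isOpen_iff_forall_mem_open.2 fun f hf =>
    ⟨PiNat.cylinder f n, fun g hg => by rwa [Set.mem_ofPred_eq, ← seg_eq_seg_iff.2 hg],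
      PiNat.isOpen_cylinder _ f n, PiNat.self_mem_cylinder f n⟩

lemma isClosed_ext (X : Set (List ℕ)) : IsClosed (ext X) := by
  have : ext X = ⋂ n, {f | seg f n ∈ Xᶜ}ᶜ := by ext; simp [ext]
  rw [this]
  exact isClosed_iInter fun n => (isOpen_setOf_seg_mem Xᶜ n).isClosed_compl

section Derivative

variable (S : Set (ℕ → ℕ))

lemma derivStep_subset (X : Set (List ℕ)) : derivStep S X ⊆ X := fun _ hx => hx.1

lemma derivStep_compl (X : Set (List ℕ)) : derivStep Sᶜ X = derivStep S X := by
  ext x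
  simp only [derivStep, Set.mem_ofPred_eq, Set.mem_compl_iff, not_not]
  constructor <;>
  · rintro ⟨hx, f, g, hf, hg, hxf, hxg, hfS, hgS⟩
    exact ⟨hx, g, f, hg, hf, hxg, hxf, hgS, hfS⟩

lemma dSeq_succ (α : Ordinal.{0}) : dSeq S (α + 1) = derivStep S (dSeq S α) := by
  rw [dSeq, Ordinal.limitRecOn_add_one]
  rfl

lemma dSeq_limit {o : Ordinal.{0}} (ho : Order.IsSuccLimit o) :
    dSeq S o = ⋂ β : Set.Iio o, dSeq S β :=
  Ordinal.limitRecOn_limit _ _ _ _ ho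

lemma dSeq_antitone : Antitone (dSeq S) := by
  intro α β
  induction β using Ordinal.limitRecOn with
  | zero => intro h; rw [nonpos_iff_eq_zero.1 h]
  | add_one γ ih =>
    intro h
    rcases h.eq_or_lt with rfl | h
    · rfl
    · rw [dSeq_succ]
      exact (derivStep_subset S _).trans (ih (Order.lt_add_one_iff.1 h))
  | limit o ho _ =>
    intro h
    rcases h.eq_or_lt with rfl | h
    · rfl
    · rw [dSeq_limit S ho]
      exact Set.iInter_subset (fun β : Set.Iio o => dSeq S β) ⟨α, h⟩

lemma exists_dSeq_succ_eq : ∃ α : Ordinal.{0}, dSeq S α = dSeq S (α + 1) := by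
  by_contra! h
  have : StrictAnti (dSeq S) := fun α β hαβ =>
    have hβ : dSeq S β ⊆ dSeq S (α + 1) := dSeq_antitone S (Order.add_one_le_of_lt hαβ)
    have hα : dSeq S (α + 1) ⊆ dSeq S α := dSeq_succ S α ▸ derivStep_subset S _
    ⟨hβ.trans hα, fun h' => h α ((h'.trans hβ).antisymm hα)⟩
  exact not_injective_of_ordinal (dSeq S) this.injective

lemma derivStep_kernel : derivStep S (kernel S) = kernel S := by
  have : dSeq S (kernelOrd S) = dSeq S (kernelOrd S + 1) := csInf_mem (exists_dSeq_succ_eq S)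
  rw [kernel, ← dSeq_succ, ← this]

end Derivative

lemma dense_preimage_of_subset_derivStep {S : Set (ℕ → ℕ)} {X : Set (List ℕ)}
    (hX : X ⊆ derivStep S X) : Dense (Subtype.val ⁻¹' S : Set (ext X)) := by
  rw [Topology.IsInducing.subtypeVal.dense_iff]
  rintro ⟨g, hg⟩
  rw [(PiNat.isTopologicalBasis_cylinders _).mem_closure_iff]
  rintro _ ⟨x, n, rfl⟩ hgx
  obtain ⟨-, f, -, hf, -, hgf, -, hfS, -⟩ := hX (hg n)
  rw [isInit, seg_length, eq_comm, seg_eq_seg_iff, PiNat.mem_cylinder_iff_eq] at hgf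
  exact ⟨f, PiNat.mem_cylinder_iff_eq.2 (hgf.trans (PiNat.mem_cylinder_iff_eq.1 hgx)),
    ⟨f, hf⟩, hfS, rfl⟩

lemma IsDelta02.isGδ {S : Set (ℕ → ℕ)} (h : IsDelta02 S) : IsGδ S := by
  obtain ⟨-, U, hU, rfl⟩ := h
  exact IsGδ.iInter_of_isOpen hU

lemma IsDelta02.isGδ_compl {S : Set (ℕ → ℕ)} (h : IsDelta02 S) : IsGδ Sᶜ := by
  obtain ⟨⟨F, hF, rfl⟩, -⟩ := h
  rw [Set.compl_iUnion]
  exact IsGδ.iInter_of_isOpen fun n => (hF n).isOpen_compl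

lemma IsDelta02.ext_kernel_eq_empty {S : Set (ℕ → ℕ)} (h : IsDelta02 S) : ext (kernel S) = ∅ := by
  have hK : kernel S ⊆ derivStep S (kernel S) := (derivStep_kernel S).ge
  have hKc : kernel S ⊆ derivStep Sᶜ (kernel S) := derivStep_compl S _ ▸ hK
  have := (isClosed_ext (kernel S)).polishSpace
  exact Set.isEmpty_coe_sort.1 <|
    (h.isGδ.preimage continuous_subtype_val).isEmpty_of_dense_of_dense_compl
      (h.isGδ_compl.preimage continuous_subtype_val) (dense_preimage_of_subset_derivStep hK)
      (dense_preimage_of_subset_derivStep hKc)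

theorem stmt12 (S : Set (ℕ → ℕ)) (h : IsDelta02 S) :
    S = S \ ext (kernel S) := by
  rw [h.ext_kernel_eq_empty, Set.sdiff_empty]
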